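/- Assume conditions (A1), (A2) and (A3). Define Φ(t) = exp(−∫_t^∞ F(c(s)) ds) for t > 0. Then Φ is well defined (the integral is finite), non-decreasing and differentiable on (0,∞) with Φ′(t) = F(c(t)) · Φ(t) for every t > 0, and lim_{t→∞} Φ(t) = 1. Consequently ∫₀^∞ F(c(t)) exp(−∫_t^∞ F(c(s)) ds) dt = 1 − exp(−∫₀^∞ F(c(s)) ds). (Probabilistically, Φ is the distribution function of the time A to the most recent common ancestor and f_A(t) = 1_{t>0} F(c(t)) Φ(t) is its density.) -/

import Mathlib

open MeasureTheory Real Set Filter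

/-- The (sub)-critical branching mechanism
`ψ(z) = b z + σ z² + ∫₀^∞ (e^{−z u} − 1 + z u) m(du)`. -/
noncomputable def psi (b σ : ℝ) (m : Measure ℝ) (z : ℝ) : ℝ :=
  b * z + σ * z ^ 2 + ∫ u in Ioi (0 : ℝ), (Real.exp (-(z * u)) - 1 + z * u) ∂m

/-- Condition (A3): either `σ > 0` or `∫₀^1 u m(du) = ∞`. -/
def condA3 (σ : ℝ) (m : Measure ℝ) : Prop :=
  0 < σ ∨ ∫⁻ u in Ioc (0 : ℝ) 1, ENNReal.ofReal u ∂m = ⊤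

/-- `v t λ ∈ (0, λ]` is the unique solution of `∫_{v_t(λ)}^{λ} dz/ψ(z) = t`
(the cumulant semigroup). -/
def IsCumulant (b σ : ℝ) (m : Measure ℝ) (v : ℝ → ℝ → ℝ) : Prop :=
  ∀ lam > (0 : ℝ), ∀ t ≥ (0 : ℝ),
    v t lam ∈ Ioc 0 lam ∧ ∫ z in (v t lam)..lam, (psi b σ m z)⁻¹ = t

/-- The immigration mechanism `F(z) = β z + ∫₀^∞ (1 − e^{−z u}) n(du)`. -/
noncomputable def Fim (β : ℝ) (n : Measure ℝ) (z : ℝ) : ℝ :=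
  β * z + ∫ u in Ioi (0 : ℝ), (1 - Real.exp (-(z * u))) ∂n

/-- Condition (A2): `∫₀^λ F(z)/ψ(z) dz < ∞` for some `λ > 0`. -/
def condA2 (b σ β : ℝ) (m n : Measure ℝ) : Prop :=
  ∃ lam > (0 : ℝ), IntegrableOn (fun z => Fim β n z / psi b σ m z) (Ioo 0 lam)

/-- Under (A1) and (A3), `c(t) ∈ (0,∞)` is defined by `∫_{c(t)}^∞ dz/ψ(z) = t`. -/
def IsExtinctionRate (b σ : ℝ) (m : Measure ℝ) (c : ℝ → ℝ) : Prop :=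
  ∀ t > (0 : ℝ), 0 < c t ∧ ∫ z in Ioi (c t), (psi b σ m z)⁻¹ = t


/-! With `G t = ∫_t^∞ F(c s) ds`, the function `Φ = exp (-G)` satisfies `Φ' = F(c) Φ ≥ 0` by the
fundamental theorem of calculus and `Φ → 1` at infinity, so `∫_0^∞ F(c t) Φ(t) dt = 1 - Φ(0+)`,
where `Φ(0+)` is `exp (-G 0)` or `0` according as `F ∘ c` is integrable near `0` or not.
`G t` is finite because the substitution `s = ∫_z^∞ dy / ψ(y)`, inverse to `z = c s`, turns
`∫_t^∞ F(c s) ds` into `∫_0^{c t} F(z) / ψ(z) dz`, which is finite by (A2). -/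

open Topology

section TailIntegral

variable {f : ℝ → ℝ} {a : ℝ}

theorem antitoneOn_integral_Ioi (hf₀ : ∀ x > a, 0 ≤ f x)
    (hint : ∀ t > a, IntegrableOn f (Ioi t)) :
    AntitoneOn (fun x => ∫ y in Ioi x, f y) (Ioi a) := by
  intro x hx y _ hxy
  have hdiff := intervalIntegral.integral_Ioi_sub_Ioi (hint x hx) hxy
  have : 0 ≤ ∫ u in x..y, f u :=
    intervalIntegral.integral_nonneg hxy fun u hu => hf₀ u (lt_of_lt_of_le hx hu.1)
  linarith

theorem strictAntiOn_integral_Ioi (hf : ContinuousOn f (Ioi a)) (hpos : ∀ x > a, 0 < f x)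
    (hint : ∀ t > a, IntegrableOn f (Ioi t)) :
    StrictAntiOn (fun x => ∫ y in Ioi x, f y) (Ioi a) := by
  intro x hx y _ hxy
  have hdiff := intervalIntegral.integral_Ioi_sub_Ioi (hint x hx) hxy.le
  have hIcc : Icc x y ⊆ Ioi a := fun u hu => lt_of_lt_of_le hx hu.1
  have : 0 < ∫ u in x..y, f u :=
    intervalIntegral.intervalIntegral_pos_of_pos_on
      ((hf.mono (by rwa [uIcc_of_le hxy.le])).intervalIntegrable)
      (fun u hu => hpos u (hIcc (Ioo_subset_Icc_self hu))) hxy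
  linarith

theorem hasDerivAt_integral_Ioi (hf : ContinuousOn f (Ioi a))
    (hint : ∀ t > a, IntegrableOn f (Ioi t)) {t : ℝ} (ht : a < t) :
    HasDerivAt (fun x => ∫ y in Ioi x, f y) (-f t) t := by
  obtain ⟨s, has, hst⟩ := exists_between ht
  have hsub : uIcc s t ⊆ Ioi a := by
    rw [uIcc_of_le hst.le]
    exact fun u hu => has.trans_le hu.1
  have hprim : HasDerivAt (fun x => ∫ y in s..x, f y) (f t) t :=
    intervalIntegral.integral_hasDerivAt_right (hf.mono hsub).intervalIntegrable
      (hf.stronglyMeasurableAtFilter isOpen_Ioi t ht) (hf.continuousAt (Ioi_mem_nhds ht))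
  have hsplit : ∀ᶠ x in 𝓝 t, ∫ y in Ioi x, f y = (∫ y in Ioi s, f y) - ∫ y in s..x, f y := by
    filter_upwards [Ioi_mem_nhds hst] with x hx
    rw [← intervalIntegral.integral_Ioi_sub_Ioi (hint s has) hx.out.le]
    ring
  simpa using ((hasDerivAt_const t _).sub hprim).congr_of_eventuallyEq hsplit

theorem tendsto_integral_Ioi_atTop (hfi : IntegrableOn f (Ioi a)) :
    Tendsto (fun x => ∫ y in Ioi x, f y) atTop (𝓝 0) := by
  have hprim := intervalIntegral_tendsto_integral_Ioi a hfi tendsto_id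
  have := (tendsto_const_nhds (x := ∫ y in Ioi a, f y)).sub hprim
  rw [sub_self] at this
  refine this.congr' ?_
  filter_upwards [eventually_ge_atTop a] with x hx
  rw [id, ← intervalIntegral.integral_Ioi_sub_Ioi hfi hx]
  ring

theorem tendsto_integral_Ioi_nhdsGT (hfi : IntegrableOn f (Ioi a)) :
    Tendsto (fun x => ∫ y in Ioi x, f y) (𝓝[>] a) (𝓝 (∫ y in Ioi a, f y)) := by
  have hint : IntervalIntegrable f volume (min a a) (max a (a + 1)) := by
    rw [min_self, max_eq_right (by linarith), intervalIntegrable_iff_integrableOn_Ioc_of_le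
      (by linarith)]
    exact hfi.mono_set Ioc_subset_Ioi_self
  have hprim : Tendsto (fun x => ∫ y in a..x, f y) (𝓝[>] a) (𝓝 0) := by
    have := intervalIntegral.continuousWithinAt_primitive (measure_singleton a) hint
    rw [continuousWithinAt_Icc_iff_Ici (by linarith)] at this
    simpa using this.tendsto.mono_left (nhdsWithin_mono _ Ioi_subset_Ici_self)
  have := (tendsto_const_nhds (x := ∫ y in Ioi a, f y)).sub hprim
  rw [sub_zero] at this
  refine this.congr' ?_
  filter_upwards [self_mem_nhdsWithin] with x hx
  rw [← intervalIntegral.integral_Ioi_sub_Ioi hfi hx.out.le]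
  ring

theorem tendsto_integral_Ioi_nhdsGT_atTop_of_not_integrableOn (hf₀ : ∀ x > a, 0 ≤ f x)
    (hint : ∀ t > a, IntegrableOn f (Ioi t)) (hfi : ¬ IntegrableOn f (Ioi a)) :
    Tendsto (fun x => ∫ y in Ioi x, f y) (𝓝[>] a) atTop := by
  refine tendsto_atTop.2 fun M => ?_
  by_contra hM
  have hG_lt : ∀ t > a, ∫ y in Ioi t, f y < M := by
    intro t ht
    by_contra! hMt
    refine hM ?_
    filter_upwards [Ioo_mem_nhdsGT ht] with x hx
    exact hMt.trans (antitoneOn_integral_Ioi hf₀ hint hx.1 ht hx.2.le)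
  set u : ℕ → ℝ := fun k => a + 1 / ((k : ℝ) + 1)
  have hu_mem : ∀ k, u k ∈ Ioc a (a + 1) := fun k => by
    refine ⟨lt_add_of_pos_right a (by positivity), ?_⟩
    simp only [u, add_le_add_iff_left]
    exact div_le_one_of_le₀ (by simp) (by positivity)
  have hu : Tendsto u atTop (𝓝 a) := by
    simpa only [add_zero] using tendsto_one_div_add_atTop_nhds_zero_nat.const_add a
  have hfi_Ioc : IntegrableOn f (Ioc a (a + 1)) := by
    refine integrableOn_Ioc_of_intervalIntegral_norm_bounded_left
      (I := M - ∫ y in Ioi (a + 1), f y)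
      (fun k => (hint (u k) (hu_mem k).1).mono_set Ioc_subset_Ioi_self) hu
      (Eventually.of_forall fun k => ?_)
    have hnorm : ∫ x in Ioc (u k) (a + 1), ‖f x‖ = ∫ x in u k..a + 1, f x := by
      rw [intervalIntegral.integral_of_le (hu_mem k).2]
      exact setIntegral_congr_fun measurableSet_Ioc fun x hx =>
        norm_of_nonneg (hf₀ x ((hu_mem k).1.trans hx.1))
    rw [hnorm, ← intervalIntegral.integral_Ioi_sub_Ioi (hint (u k) (hu_mem k).1) (hu_mem k).2]
    linarith [hG_lt (u k) (hu_mem k).1]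
  exact hfi (Ioc_union_Ioi_eq_Ioi (by linarith : a ≤ a + 1) ▸
    hfi_Ioc.union (hint (a + 1) (by simp)))

end TailIntegral

section SurvivalFunction

variable {f : ℝ → ℝ} {a : ℝ}

theorem monotoneOn_exp_neg_integral_Ioi (hf₀ : ∀ x > a, 0 ≤ f x)
    (hint : ∀ t > a, IntegrableOn f (Ioi t)) :
    MonotoneOn (fun t => exp (-(∫ s in Ioi t, f s))) (Ioi a) := fun _ hx _ hy hxy =>
  exp_le_exp.2 (neg_le_neg (antitoneOn_integral_Ioi hf₀ hint hx hy hxy))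

theorem hasDerivAt_exp_neg_integral_Ioi (hf : ContinuousOn f (Ioi a))
    (hint : ∀ t > a, IntegrableOn f (Ioi t)) {t : ℝ} (ht : a < t) :
    HasDerivAt (fun x => exp (-(∫ s in Ioi x, f s))) (f t * exp (-(∫ s in Ioi t, f s))) t := by
  simpa [mul_comm] using (hasDerivAt_integral_Ioi hf hint ht).neg.exp

theorem tendsto_exp_neg_integral_Ioi_atTop (hfi : IntegrableOn f (Ioi a)) :
    Tendsto (fun t => exp (-(∫ s in Ioi t, f s))) atTop (𝓝 1) := by
  have h := (continuous_exp.tendsto _).comp (tendsto_integral_Ioi_atTop hfi).neg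
  rwa [neg_zero, exp_zero] at h

theorem tendsto_exp_neg_integral_Ioi_nhdsGT (hfi : IntegrableOn f (Ioi a)) :
    Tendsto (fun t => exp (-(∫ s in Ioi t, f s))) (𝓝[>] a) (𝓝 (exp (-(∫ s in Ioi a, f s)))) :=
  (continuous_exp.tendsto _).comp (tendsto_integral_Ioi_nhdsGT hfi).neg

theorem tendsto_exp_neg_integral_Ioi_nhdsGT_zero (hf₀ : ∀ x > a, 0 ≤ f x)
    (hint : ∀ t > a, IntegrableOn f (Ioi t)) (hfi : ¬ IntegrableOn f (Ioi a)) :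
    Tendsto (fun t => exp (-(∫ s in Ioi t, f s))) (𝓝[>] a) (𝓝 0) :=
  tendsto_exp_atBot.comp <| tendsto_neg_atTop_atBot.comp <|
    tendsto_integral_Ioi_nhdsGT_atTop_of_not_integrableOn hf₀ hint hfi

theorem integral_Ioi_mul_exp_neg_integral_Ioi (hf : ContinuousOn f (Ioi a))
    (hf₀ : ∀ x > a, 0 ≤ f x) (hint : ∀ t > a, IntegrableOn f (Ioi t)) {L : ℝ}
    (hL : Tendsto (fun t => exp (-(∫ s in Ioi t, f s))) (𝓝[>] a) (𝓝 L)) :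
    ∫ t in Ioi a, f t * exp (-(∫ s in Ioi t, f s)) = 1 - L := by
  set Φ := fun t => exp (-(∫ s in Ioi t, f s))
  -- `Φ a` is a junk value when `f` is not integrable on `Ioi a`, so `Φ` is patched at `a`.
  have hcont : ContinuousWithinAt (Function.update Φ a L) (Ici a) a := by
    rwa [continuousWithinAt_update_same, Ici_sdiff_left]
  have hupdate : ∀ x > a, Function.update Φ a L =ᶠ[𝓝 x] Φ := fun x hx => by
    filter_upwards [Ioi_mem_nhds hx] with y hy
    exact Function.update_of_ne hy.out.ne' _ _
  have h := integral_Ioi_of_hasDerivAt_of_nonneg hcont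
    (fun x hx => (hasDerivAt_exp_neg_integral_Ioi hf hint hx).congr_of_eventuallyEq (hupdate x hx))
    (fun x hx => mul_nonneg (hf₀ x hx) (exp_pos _).le)
    ((tendsto_exp_neg_integral_Ioi_atTop (hint (a + 1) (by linarith))).congr' <| by
      filter_upwards [eventually_gt_atTop a] with y hy
      exact (Function.update_of_ne hy.ne' L Φ).symm)
  simpa using h

end SurvivalFunction

theorem exp_neg_sub_one_add_nonneg (x : ℝ) : 0 ≤ exp (-x) - 1 + x := by
  linarith [add_one_le_exp (-x)]

theorem exp_neg_sub_one_add_le_min {x : ℝ} (hx : 0 ≤ x) : exp (-x) - 1 + x ≤ min x (x ^ 2) := by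
  refine le_min (by linarith [exp_le_one_iff.2 (neg_nonpos.2 hx)]) ?_
  rcases le_total x 1 with h | h
  · have := (abs_le.1 (abs_exp_sub_one_sub_id_le (x := -x) (by rwa [abs_neg, abs_of_nonneg hx]))).2
    linarith [neg_sq x]
  · nlinarith [exp_le_one_iff.2 (neg_nonpos.2 hx)]

theorem one_sub_exp_neg_le_min (x : ℝ) : 1 - exp (-x) ≤ min 1 x :=
  le_min (by linarith [exp_pos (-x)]) (by linarith [one_sub_le_exp_neg x])

theorem norm_exp_neg_mul_sub_one_add_le {z u R : ℝ} (hz : 0 ≤ z) (hzR : z ≤ R) (hu : 0 ≤ u) :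
    ‖exp (-(z * u)) - 1 + z * u‖ ≤ max R (R ^ 2) * min u (u ^ 2) := by
  have hR : z ≤ max R (R ^ 2) := hzR.trans (le_max_left _ _)
  have hR2 : z ^ 2 ≤ max R (R ^ 2) := (pow_le_pow_left₀ hz hzR 2).trans (le_max_right _ _)
  rw [norm_of_nonneg (exp_neg_sub_one_add_nonneg _), mul_min_of_nonneg _ _ (hz.trans hR)]
  calc exp (-(z * u)) - 1 + z * u ≤ min (z * u) ((z * u) ^ 2) :=
        exp_neg_sub_one_add_le_min (mul_nonneg hz hu)
    _ ≤ min (max R (R ^ 2) * u) (max R (R ^ 2) * u ^ 2) := by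
        rw [mul_pow]
        exact min_le_min (mul_le_mul_of_nonneg_right hR hu)
          (mul_le_mul_of_nonneg_right hR2 (sq_nonneg u))

theorem norm_one_sub_exp_neg_mul_le {z u R : ℝ} (hz : 0 ≤ z) (hzR : z ≤ R) (hu : 0 ≤ u) :
    ‖1 - exp (-(z * u))‖ ≤ max 1 R * min 1 u := by
  have hR : z ≤ max 1 R := hzR.trans (le_max_right _ _)
  rw [norm_of_nonneg (by linarith [exp_le_one_iff.2 (neg_nonpos.2 (mul_nonneg hz hu))]),
    mul_min_of_nonneg _ _ (zero_le_one.trans (le_max_left _ _)), mul_one]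
  exact (one_sub_exp_neg_le_min (z * u)).trans
    (min_le_min (le_max_left _ _) (mul_le_mul_of_nonneg_right hR hu))

section Mechanisms

variable {b σ β : ℝ} {m n : Measure ℝ}

theorem integrableOn_psi_integrand (hm : IntegrableOn (fun u => min u (u ^ 2)) (Ioi 0) m)
    {z : ℝ} (hz : 0 ≤ z) :
    IntegrableOn (fun u => exp (-(z * u)) - 1 + z * u) (Ioi 0) m :=
  (hm.const_mul (max z (z ^ 2))).mono' (by fun_prop : Continuous _).aestronglyMeasurable <|
    (ae_restrict_iff' measurableSet_Ioi).2 <| ae_of_all _ fun _ hu =>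
      norm_exp_neg_mul_sub_one_add_le hz le_rfl hu.out.le

theorem psi_pos (hb : 0 ≤ b) (hσ : 0 ≤ σ)
    (hm : IntegrableOn (fun u => min u (u ^ 2)) (Ioi 0) m) (hA3 : condA3 σ m)
    {z : ℝ} (hz : 0 < z) : 0 < psi b σ m z := by
  have hlin : 0 ≤ b * z := mul_nonneg hb hz.le
  have hint : 0 ≤ ∫ u in Ioi 0, (exp (-(z * u)) - 1 + z * u) ∂m :=
    setIntegral_nonneg measurableSet_Ioi fun _ _ => exp_neg_sub_one_add_nonneg _
  rcases hA3 with hσ₀ | hmass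
  · have : 0 < σ * z ^ 2 := by positivity
    unfold psi; linarith
  · -- `∫₀^1 u m(du) = ∞` forces `m` to charge `(0, 1]`, where the integrand is positive.
    have hm₀ : m (Ioc 0 1) ≠ 0 := fun h0 => by
      rw [setLIntegral_measure_zero _ _ h0] at hmass
      exact ENNReal.zero_ne_top hmass
    have hpos : 0 < ∫ u in Ioi 0, (exp (-(z * u)) - 1 + z * u) ∂m := by
      rw [setIntegral_pos_iff_support_of_nonneg_ae
        ((ae_restrict_iff' measurableSet_Ioi).2 <|
          ae_of_all _ fun u _ => exp_neg_sub_one_add_nonneg _)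
        (integrableOn_psi_integrand hm hz.le)]
      refine (pos_iff_ne_zero.2 hm₀).trans_le (measure_mono fun u hu => ⟨?_, hu.1⟩)
      have := add_one_lt_exp (neg_ne_zero.2 (mul_pos hz hu.1).ne')
      exact (by linarith : 0 < exp (-(z * u)) - 1 + z * u).ne'
    have : 0 ≤ σ * z ^ 2 := by positivity
    unfold psi; linarith

theorem continuousAt_psi (hm : IntegrableOn (fun u => min u (u ^ 2)) (Ioi 0) m)
    {z : ℝ} (hz : 0 < z) : ContinuousAt (psi b σ m) z := by
  have hint : ContinuousOn (fun y => ∫ u in Ioi 0, (exp (-(y * u)) - 1 + y * u) ∂m)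
      (Icc 0 (z + 1)) :=
    continuousOn_of_dominated (fun _ _ => (by fun_prop : Continuous _).aestronglyMeasurable)
      (fun _ hy => (ae_restrict_iff' measurableSet_Ioi).2 <| ae_of_all _ fun _ hu =>
        norm_exp_neg_mul_sub_one_add_le hy.1 hy.2 hu.out.le)
      (hm.const_mul _) (ae_of_all _ fun _ => by fun_prop)
  exact (by fun_prop : Continuous fun y : ℝ => b * y + σ * y ^ 2).continuousAt.add
    (hint.continuousAt (Icc_mem_nhds hz (by linarith)))

theorem continuousOn_inv_psi (hb : 0 ≤ b) (hσ : 0 ≤ σ)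
    (hm : IntegrableOn (fun u => min u (u ^ 2)) (Ioi 0) m) (hA3 : condA3 σ m) :
    ContinuousOn (fun z => (psi b σ m z)⁻¹) (Ioi 0) := fun _ hz =>
  ((continuousAt_psi hm hz).inv₀ (psi_pos hb hσ hm hA3 hz).ne').continuousWithinAt

theorem Fim_nonneg (hβ : 0 ≤ β) {z : ℝ} (hz : 0 ≤ z) : 0 ≤ Fim β n z :=
  add_nonneg (mul_nonneg hβ hz) <| setIntegral_nonneg measurableSet_Ioi fun u hu => by
    linarith [exp_le_one_iff.2 (neg_nonpos.2 (mul_nonneg hz hu.out.le))]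

theorem continuousAt_Fim (hn : IntegrableOn (fun u => min 1 u) (Ioi 0) n)
    {z : ℝ} (hz : 0 < z) : ContinuousAt (Fim β n) z := by
  have hint : ContinuousOn (fun y => ∫ u in Ioi 0, (1 - exp (-(y * u))) ∂n) (Icc 0 (z + 1)) :=
    continuousOn_of_dominated (fun _ _ => (by fun_prop : Continuous _).aestronglyMeasurable)
      (fun _ hy => (ae_restrict_iff' measurableSet_Ioi).2 <| ae_of_all _ fun _ hu =>
        norm_one_sub_exp_neg_mul_le hy.1 hy.2 hu.out.le)
      (hn.const_mul _) (ae_of_all _ fun _ => by fun_prop)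
  exact (continuous_const_mul β).continuousAt.add
    (hint.continuousAt (Icc_mem_nhds hz (by linarith)))

theorem integrableOn_Fim_div_psi_Ioo (hb : 0 ≤ b) (hσ : 0 ≤ σ)
    (hm : IntegrableOn (fun u => min u (u ^ 2)) (Ioi 0) m)
    (hn : IntegrableOn (fun u => min 1 u) (Ioi 0) n) (hA2 : condA2 b σ β m n)
    (hA3 : condA3 σ m) (x : ℝ) :
    IntegrableOn (fun z => Fim β n z / psi b σ m z) (Ioo 0 x) := by
  obtain ⟨lam, hlam, hA2⟩ := hA2
  have hcont : ContinuousOn (fun z => Fim β n z / psi b σ m z) (Icc lam x) := fun z hz =>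
    have hz₀ : 0 < z := hlam.trans_le hz.1
    ((continuousAt_Fim hn hz₀).div (continuousAt_psi hm hz₀)
      (psi_pos hb hσ hm hA3 hz₀).ne').continuousWithinAt
  refine (hA2.union hcont.integrableOn_Icc).mono_set fun z hz => ?_
  rcases lt_or_ge z lam with h | h
  exacts [Or.inl ⟨hz.1, h⟩, Or.inr ⟨h, hz.2.le⟩]

end Mechanisms

section ExtinctionRate

variable {b σ : ℝ} {m : Measure ℝ} (hb : 0 ≤ b) (hσ : 0 ≤ σ)
  (hm : IntegrableOn (fun u => min u (u ^ 2)) (Ioi 0) m)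
  (hA1 : IntegrableOn (fun z => (psi b σ m z)⁻¹) (Ioi 1)) (hA3 : condA3 σ m)
include hb hσ hm hA1 hA3

theorem integrableOn_inv_psi_Ioi {x : ℝ} (hx : 0 < x) :
    IntegrableOn (fun z => (psi b σ m z)⁻¹) (Ioi x) := by
  have hIcc : IntegrableOn (fun z => (psi b σ m z)⁻¹) (Icc x 1) :=
    ((continuousOn_inv_psi hb hσ hm hA3).mono fun z hz => hx.trans_le hz.1).integrableOn_Icc
  refine (hIcc.union hA1).mono_set fun z hz => ?_
  rcases le_or_gt z 1 with h | h
  exacts [Or.inl ⟨hz.out.le, h⟩, Or.inr h]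

theorem strictAntiOn_integral_inv_psi_Ioi :
    StrictAntiOn (fun x => ∫ z in Ioi x, (psi b σ m z)⁻¹) (Ioi 0) :=
  strictAntiOn_integral_Ioi (continuousOn_inv_psi hb hσ hm hA3)
    (fun _ hz => inv_pos.2 (psi_pos hb hσ hm hA3 hz))
    (fun _ ht => integrableOn_inv_psi_Ioi hb hσ hm hA1 hA3 ht)

theorem integral_inv_psi_Ioi_pos {x : ℝ} (hx : 0 < x) : 0 < ∫ z in Ioi x, (psi b σ m z)⁻¹ :=
  (setIntegral_nonneg measurableSet_Ioi fun _ hz =>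
    (inv_pos.2 (psi_pos hb hσ hm hA3 (hx.trans ((lt_add_one x).trans hz)))).le).trans_lt <|
      strictAntiOn_integral_inv_psi_Ioi hb hσ hm hA1 hA3 hx
        (mem_Ioi.2 (by linarith)) (lt_add_one x)

variable {c : ℝ → ℝ} (hc : IsExtinctionRate b σ m c)
include hc

theorem IsExtinctionRate.strictAntiOn : StrictAntiOn c (Ioi 0) := fun s hs t ht hst =>
  ((strictAntiOn_integral_inv_psi_Ioi hb hσ hm hA1 hA3).lt_iff_gt (hc s hs).1 (hc t ht).1).1 <| by
    simp only [(hc s hs).2, (hc t ht).2, hst]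

theorem IsExtinctionRate.apply_integral_inv_psi_Ioi {z : ℝ} (hz : 0 < z) :
    c (∫ y in Ioi z, (psi b σ m y)⁻¹) = z :=
  have hH := integral_inv_psi_Ioi_pos hb hσ hm hA1 hA3 hz
  (strictAntiOn_integral_inv_psi_Ioi hb hσ hm hA1 hA3).injOn (hc _ hH).1 hz (hc _ hH).2

theorem IsExtinctionRate.continuousAt {t : ℝ} (ht : 0 < t) : ContinuousAt c t := by
  have hmono : StrictMonoOn (-c) (Ioi 0) := fun x hx y hy hxy =>
    neg_lt_neg (hc.strictAntiOn hb hσ hm hA1 hA3 hx hy hxy)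
  -- `c` is onto `(0, ∞)`, a right inverse of the tail integral of `1 / ψ`.
  have himage : (-c) '' Ioi 0 ∈ 𝓝 ((-c) t) := by
    refine mem_of_superset (Iio_mem_nhds (neg_neg_of_pos (hc t ht).1)) fun y hy => ?_
    have hy' : 0 < -y := neg_pos.2 hy
    exact ⟨_, integral_inv_psi_Ioi_pos hb hσ hm hA1 hA3 hy',
      by rw [Pi.neg_apply, hc.apply_integral_inv_psi_Ioi hb hσ hm hA1 hA3 hy', neg_neg]⟩
  simpa only [neg_neg] using (hmono.continuousAt_of_image_mem_nhds (Ioi_mem_nhds ht) himage).neg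

theorem IsExtinctionRate.integrableOn_comp_Ioi {g : ℝ → ℝ} {t : ℝ} (ht : 0 < t)
    (hg : IntegrableOn (fun z => g z / psi b σ m z) (Ioo 0 (c t))) :
    IntegrableOn (fun s => g (c s)) (Ioi t) := by
  set H := fun x => ∫ z in Ioi x, (psi b σ m z)⁻¹
  -- Substitute `s = H z`, `z ∈ (0, c t)`: then `c s = z` and `|dH/dz| = 1 / ψ z`.
  have hH' : ∀ z ∈ Ioo 0 (c t), HasDerivWithinAt H (-(psi b σ m z)⁻¹) (Ioo 0 (c t)) z :=
    fun z hz => (hasDerivAt_integral_Ioi (continuousOn_inv_psi hb hσ hm hA3)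
      (fun _ hx => integrableOn_inv_psi_Ioi hb hσ hm hA1 hA3 hx) hz.1).hasDerivWithinAt
  have hinj : InjOn H (Ioo 0 (c t)) :=
    (strictAntiOn_integral_inv_psi_Ioi hb hσ hm hA1 hA3).injOn.mono Ioo_subset_Ioi_self
  have himage : Ioi t ⊆ H '' Ioo 0 (c t) := fun s hs =>
    ⟨c s, ⟨(hc s (ht.trans hs)).1, hc.strictAntiOn hb hσ hm hA1 hA3 ht (ht.trans hs) hs⟩,
      (hc s (ht.trans hs)).2⟩
  refine IntegrableOn.mono_set ?_ himage
  rw [integrableOn_image_iff_integrableOn_abs_deriv_smul measurableSet_Ioo hH' hinj]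
  refine hg.congr_fun (fun z hz => ?_) measurableSet_Ioo
  dsimp only
  rw [hc.apply_integral_inv_psi_Ioi hb hσ hm hA1 hA3 hz.1, abs_neg,
    abs_of_pos (inv_pos.2 (psi_pos hb hσ hm hA3 hz.1)), smul_eq_mul, div_eq_inv_mul]

end ExtinctionRate

theorem tmrca_distribution_function (b σ β : ℝ) (m n : Measure ℝ)
    (hb : 0 ≤ b) (hσ : 0 ≤ σ) (hβ : 0 ≤ β)
    (hm : IntegrableOn (fun u => min u (u ^ 2)) (Ioi 0) m)
    (hn : IntegrableOn (fun u => min 1 u) (Ioi 0) n)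
    (hA1 : IntegrableOn (fun z => (psi b σ m z)⁻¹) (Ioi 1))
    (hA2 : condA2 b σ β m n) (hA3 : condA3 σ m)
    (c : ℝ → ℝ) (hc : IsExtinctionRate b σ m c) :
    (∀ t > (0 : ℝ), IntegrableOn (fun s => Fim β n (c s)) (Ioi t)) ∧
    MonotoneOn (fun t => Real.exp (-(∫ s in Ioi t, Fim β n (c s)))) (Ioi 0) ∧
    (∀ t > (0 : ℝ),
      HasDerivAt (fun x => Real.exp (-(∫ s in Ioi x, Fim β n (c s))))
        (Fim β n (c t) * Real.exp (-(∫ s in Ioi t, Fim β n (c s)))) t) ∧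
    Tendsto (fun t => Real.exp (-(∫ s in Ioi t, Fim β n (c s)))) atTop (nhds 1) ∧
    (IntegrableOn (fun s => Fim β n (c s)) (Ioi 0) →
      ∫ t in Ioi (0 : ℝ),
          Fim β n (c t) * Real.exp (-(∫ s in Ioi t, Fim β n (c s))) =
        1 - Real.exp (-(∫ s in Ioi (0 : ℝ), Fim β n (c s)))) ∧
    (¬ IntegrableOn (fun s => Fim β n (c s)) (Ioi 0) →
      ∫ t in Ioi (0 : ℝ),
          Fim β n (c t) * Real.exp (-(∫ s in Ioi t, Fim β n (c s))) = 1) := by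
  have hFc₀ : ∀ t > (0 : ℝ), 0 ≤ Fim β n (c t) := fun t ht => Fim_nonneg hβ (hc t ht).1.le
  have hFc_cont : ContinuousOn (fun s => Fim β n (c s)) (Ioi 0) := fun t ht =>
    ((continuousAt_Fim hn (hc t ht).1).comp
      (hc.continuousAt hb hσ hm hA1 hA3 ht)).continuousWithinAt
  have hFc_int : ∀ t > (0 : ℝ), IntegrableOn (fun s => Fim β n (c s)) (Ioi t) := fun t ht =>
    hc.integrableOn_comp_Ioi hb hσ hm hA1 hA3 ht
      (integrableOn_Fim_div_psi_Ioo hb hσ hm hn hA2 hA3 (c t))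
  refine ⟨hFc_int, monotoneOn_exp_neg_integral_Ioi hFc₀ hFc_int,
    fun t ht => hasDerivAt_exp_neg_integral_Ioi hFc_cont hFc_int ht,
    tendsto_exp_neg_integral_Ioi_atTop (hFc_int 1 one_pos), fun hI => ?_, fun hI => ?_⟩
  · exact integral_Ioi_mul_exp_neg_integral_Ioi hFc_cont hFc₀ hFc_int
      (tendsto_exp_neg_integral_Ioi_nhdsGT hI)
  · simpa using integral_Ioi_mul_exp_neg_integral_Ioi hFc_cont hFc₀ hFc_int
      (tendsto_exp_neg_integral_Ioi_nhdsGT_zero hFc₀ hFc_int hI)
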